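/- arXiv:2010.07714 — 2 statements merged into one kernel-verified Lean document; each statement's English description precedes it below -/
import Mathlib

section
/- Let (X,T,μ) be a system with exponential decay of correlations for functions of bounded variation against L¹, with constants C, τ > 0. Let (B_m)_{m≥1} be a decreasing (nested) sequence of balls in X with common centre x₀, and suppose there are ε > 0 and m₀ ∈ ℕ such that μ(B_m) ≥ m^{-1}(log m)^{1+ε} for all m ≥ m₀. Then μ(H_ea) = 1, where H_ea is the set of eventually always hitting points for (B_m). -/
/-!
Let `S_N` count the visits of the first `N` iterates to a ball `B`. Decay of correlations, applied
to the indicator of `B` (whose BV norm is at most 3), bounds the covariance of the visit indicators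
at times `i, j` by `3 C μ(B) e^{-τ|i-j|}`, so `Var S_N ≤ 6 C (1 - e^{-τ})⁻¹ N μ(B)`, and Chebyshev's
inequality gives `μ(S_N = 0) ≲ 1 / (N μ(B))`. For `N = 2ⁿ` and the ball `B_{2^{n+1}}` the growth
condition makes this `≲ n^{-(1+ε)}`, which is summable; by Borel–Cantelli almost every point visits
`B_{2^{n+1}}` before time `2ⁿ` for all large `n`, and since the balls are nested this covers every
`m ∈ [2ⁿ, 2^{n+1})`.
-/

open MeasureTheory Filter Set ProbabilityTheory

lemma Monotone.eVariationOn_univ_le {α : Type*} [LinearOrder α] {f : α → ℝ} (hf : Monotone f)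
    {a b : ℝ} (hab : ∀ x, f x ∈ Icc a b) : eVariationOn f univ ≤ ENNReal.ofReal (b - a) := by
  rw [eVariationOn.eq_biSup_inter_Icc]
  refine iSup₂_le fun p _ => ?_
  rw [(hf.monotoneOn univ).eVariationOn_eq (mem_univ _) (mem_univ _)]
  exact ENNReal.ofReal_le_ofReal (sub_le_sub (hab _).2 (hab _).1)

lemma Antitone.eVariationOn_univ_le {α : Type*} [LinearOrder α] {f : α → ℝ} (hf : Antitone f)
    {a b : ℝ} (hab : ∀ x, f x ∈ Icc a b) : eVariationOn f univ ≤ ENNReal.ofReal (b - a) := by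
  rw [← eVariationOn.comp_ofDual, preimage_univ]
  exact hf.dual_left.eVariationOn_univ_le fun x => hab (OrderDual.ofDual x)

lemma indicator_one_mem_Icc {α : Type*} (s : Set α) (x : α) :
    s.indicator (1 : α → ℝ) x ∈ Icc (0 : ℝ) 1 := by
  by_cases hx : x ∈ s <;> simp [hx]

lemma IsUpperSet.monotone_indicator_one {α : Type*} [Preorder α] {s : Set α} (hs : IsUpperSet s) :
    Monotone (s.indicator (1 : α → ℝ)) := by
  intro x y hxy
  by_cases hx : x ∈ s
  · simp [hx, hs hxy hx]
  · simpa [hx] using (indicator_one_mem_Icc s y).1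

lemma IsLowerSet.antitone_indicator_one {α : Type*} [Preorder α] {s : Set α} (hs : IsLowerSet s) :
    Antitone (s.indicator (1 : α → ℝ)) :=
  fun _ _ hxy => hs.toDual.monotone_indicator_one hxy

lemma eVariationOn_indicator_ball_le (x₀ R : ℝ) :
    eVariationOn ((Metric.ball x₀ R).indicator (1 : ℝ → ℝ)) univ ≤ 2 := by
  rw [Real.ball_eq_Ioo, ← Ioi_inter_Iio, inter_indicator_one]
  have hle (s : Set ℝ) (x : ℝ) (_ : x ∈ univ) : ‖s.indicator (1 : ℝ → ℝ) x‖ₑ ≤ 1 := by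
    by_cases hx : x ∈ s <;> simp [hx]
  calc _ ≤ 1 * eVariationOn ((Iio (x₀ + R)).indicator (1 : ℝ → ℝ)) univ
        + 1 * eVariationOn ((Ioi (x₀ - R)).indicator (1 : ℝ → ℝ)) univ :=
        eVariation_mul_le (hle _) (hle _)
    _ ≤ 1 * ENNReal.ofReal (1 - 0) + 1 * ENNReal.ofReal (1 - 0) := by
        gcongr
        · exact (isLowerSet_Iio _).antitone_indicator_one.eVariationOn_univ_le
            (indicator_one_mem_Icc _)
        · exact (isUpperSet_Ioi _).monotone_indicator_one.eVariationOn_univ_le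
            (indicator_one_mem_Icc _)
    _ = 2 := by norm_num

lemma iSup_abs_add_eVariationOn_indicator_ball_le (x₀ R : ℝ) :
    (⨆ x, |(Metric.ball x₀ R).indicator (1 : ℝ → ℝ) x|) +
      (eVariationOn ((Metric.ball x₀ R).indicator (1 : ℝ → ℝ)) univ).toReal ≤ 3 := by
  have hsup : (⨆ x, |(Metric.ball x₀ R).indicator (1 : ℝ → ℝ) x|) ≤ 1 := ciSup_le fun x =>
    have hx := indicator_one_mem_Icc (Metric.ball x₀ R) x
    (abs_of_nonneg hx.1).trans_le hx.2
  have hvar := ENNReal.toReal_le_of_le_ofReal zero_le_two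
    (by simpa using eVariationOn_indicator_ball_le x₀ R)
  linarith

lemma sum_range_pow_le_inv_one_sub {x : ℝ} (h0 : 0 ≤ x) (h1 : x < 1) (n : ℕ) :
    ∑ k ∈ Finset.range n, x ^ k ≤ (1 - x)⁻¹ :=
  tsum_geometric_of_lt_one h0 h1 ▸
    (summable_geometric_of_lt_one h0 h1).sum_le_tsum _ fun k _ => pow_nonneg h0 k

lemma sum_range_pow_dist_le {x : ℝ} (h0 : 0 ≤ x) (h1 : x < 1) (i N : ℕ) :
    ∑ j ∈ Finset.range N, x ^ Nat.dist i j ≤ 2 * (1 - x)⁻¹ := by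
  have hnn : ∀ j, 0 ≤ x ^ Nat.dist i j := fun j => pow_nonneg h0 _
  calc ∑ j ∈ Finset.range N, x ^ Nat.dist i j
      ≤ ∑ j ∈ Finset.range (i + 1) ∪ Finset.Ico i N, x ^ Nat.dist i j :=
        Finset.sum_le_sum_of_subset_of_nonneg (fun j hj => by simp at hj ⊢; omega)
          fun j _ _ => hnn j
    _ ≤ ∑ j ∈ Finset.range (i + 1), x ^ Nat.dist i j + ∑ j ∈ Finset.Ico i N, x ^ Nat.dist i j := by
        rw [← Finset.sum_union_inter]
        exact le_add_of_nonneg_right (Finset.sum_nonneg fun j _ => hnn j)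
    _ = ∑ k ∈ Finset.range (i + 1), x ^ k + ∑ k ∈ Finset.range (N - i), x ^ k := by
        congr 1
        · rw [← Finset.sum_range_reflect]
          refine Finset.sum_congr rfl fun j hj => ?_
          rw [Finset.mem_range] at hj
          rw [Nat.dist_eq_sub_of_le_right (by omega)]
          congr 1
          omega
        · rw [Finset.sum_Ico_eq_sum_range]
          refine Finset.sum_congr rfl fun k _ => ?_
          rw [Nat.dist_eq_sub_of_le (by omega), Nat.add_sub_cancel_left]
    _ ≤ 2 * (1 - x)⁻¹ := by
        linarith [sum_range_pow_le_inv_one_sub h0 h1 (i + 1),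
          sum_range_pow_le_inv_one_sub h0 h1 (N - i)]

def HasExpDecayOfCorrelations (μ : Measure ℝ) (T : ℝ → ℝ) (C τ : ℝ) : Prop :=
  ∀ (n : ℕ) (f g : ℝ → ℝ), Integrable f μ → BoundedVariationOn g univ →
    |(∫ x, f (T^[n] x) * g x ∂μ) - (∫ x, f x ∂μ) * ∫ x, g x ∂μ| ≤
      C * Real.exp (-τ * n) * (∫ x, |f x| ∂μ) * ((⨆ x, |g x|) + (eVariationOn g univ).toReal)

noncomputable def visitCount {α : Type*} (T : α → α) (s : Set α) (N : ℕ) (x : α) : ℝ :=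
  ∑ k ∈ Finset.range N, s.indicator 1 (T^[k] x)

section Visits

variable {α : Type*} [MeasurableSpace α] {μ : Measure α} {T : α → α}

lemma memLp_indicator_one_comp [IsFiniteMeasure μ] {β : Type*} [MeasurableSpace β] {s : Set β}
    (hs : MeasurableSet s) {f : α → β} (hf : Measurable f) :
    MemLp (fun x => s.indicator (1 : β → ℝ) (f x)) 2 μ :=
  .of_bound ((measurable_one.indicator hs).comp hf).aestronglyMeasurable 1 <|
    ae_of_all _ fun x => by
      have hx := indicator_one_mem_Icc s (f x)
      simpa [abs_of_nonneg hx.1] using hx.2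

lemma integral_indicator_one_comp_iterate (hT : MeasurePreserving T μ μ) {s : Set α}
    (hs : MeasurableSet s) (k : ℕ) : ∫ x, s.indicator (1 : α → ℝ) (T^[k] x) ∂μ = μ.real s := by
  rw [← integral_map (hT.iterate k).measurable.aemeasurable
    (measurable_one.indicator hs).aestronglyMeasurable, (hT.iterate k).map_eq,
    integral_indicator_one hs]

lemma memLp_visitCount [IsFiniteMeasure μ] (hT : Measurable T) {s : Set α}
    (hs : MeasurableSet s) (N : ℕ) : MemLp (visitCount T s N) 2 μ :=
  memLp_finsetSum _ fun k _ => memLp_indicator_one_comp hs (hT.iterate k)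

lemma integral_visitCount [IsFiniteMeasure μ] (hT : MeasurePreserving T μ μ) {s : Set α}
    (hs : MeasurableSet s) (N : ℕ) : μ[visitCount T s N] = N * μ.real s := by
  unfold visitCount
  rw [integral_finsetSum _ fun k _ =>
    (memLp_indicator_one_comp hs (hT.iterate k).measurable).integrable one_le_two]
  simp [integral_indicator_one_comp_iterate hT hs]

end Visits

section DecayOfCorrelations

variable {μ : Measure ℝ} {T : ℝ → ℝ} {C τ : ℝ}

lemma integral_indicator_ball_comp_iterate_mul_le [IsFiniteMeasure μ]
    (hdec : HasExpDecayOfCorrelations μ T C τ) (hC : 0 ≤ C) (x₀ R : ℝ) (n : ℕ) :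
    ∫ x, (Metric.ball x₀ R).indicator 1 (T^[n] x) * (Metric.ball x₀ R).indicator 1 x ∂μ ≤
      μ.real (Metric.ball x₀ R) ^ 2 + 3 * C * μ.real (Metric.ball x₀ R) * Real.exp (-τ) ^ n := by
  set B := Metric.ball x₀ R
  have hB : MeasurableSet B := measurableSet_ball
  have hint : ∫ x, B.indicator (1 : ℝ → ℝ) x ∂μ = μ.real B := integral_indicator_one hB
  have habs : ∫ x, |B.indicator (1 : ℝ → ℝ) x| ∂μ = μ.real B := by
    simp_rw [abs_of_nonneg (indicator_one_mem_Icc B _).1, hint]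
  have hbv : BoundedVariationOn (B.indicator (1 : ℝ → ℝ)) univ :=
    ne_top_of_le_ne_top ENNReal.ofNat_ne_top (eVariationOn_indicator_ball_le x₀ R)
  have h := (abs_le.1 (hdec n (B.indicator 1) (B.indicator 1)
    ((integrable_const (1 : ℝ)).indicator hB) hbv)).2
  rw [hint, habs] at h
  rw [← Real.exp_nat_mul, mul_comm (n : ℝ), sq]
  have : C * Real.exp (-τ * n) * μ.real B * _ ≤ C * Real.exp (-τ * n) * μ.real B * 3 :=
    mul_le_mul_of_nonneg_left (iSup_abs_add_eVariationOn_indicator_ball_le x₀ R) (by positivity)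
  linarith

lemma covariance_indicator_ball_comp_iterate_le [IsProbabilityMeasure μ]
    (hT : MeasurePreserving T μ μ) (hdec : HasExpDecayOfCorrelations μ T C τ) (hC : 0 ≤ C)
    (x₀ R : ℝ) (i j : ℕ) :
    cov[fun x => (Metric.ball x₀ R).indicator 1 (T^[i] x),
        fun x => (Metric.ball x₀ R).indicator 1 (T^[j] x); μ] ≤
      3 * C * μ.real (Metric.ball x₀ R) * Real.exp (-τ) ^ Nat.dist i j := by
  wlog hij : i ≤ j generalizing i j
  · rw [covariance_comm, Nat.dist_comm]
    exact this j i (by omega)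
  obtain ⟨d, rfl⟩ : ∃ d, j = d + i := ⟨j - i, by omega⟩
  set B := Metric.ball x₀ R
  have hB : MeasurableSet B := measurableSet_ball
  have hind : Measurable (B.indicator (1 : ℝ → ℝ)) := measurable_one.indicator hB
  have hshift : cov[fun x => B.indicator 1 (T^[i] x), fun x => B.indicator 1 (T^[d + i] x); μ] =
      cov[B.indicator 1, fun x => B.indicator 1 (T^[d] x); μ] := by
    conv_rhs => rw [← (hT.iterate i).map_eq]
    rw [covariance_map_fun (X := B.indicator 1) (Y := fun x => B.indicator 1 (T^[d] x))
      hind.aestronglyMeasurable (hind.comp (hT.iterate d).measurable).aestronglyMeasurable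
      (hT.iterate i).measurable.aemeasurable]
    simp_rw [Function.iterate_add_apply]
  rw [hshift, Nat.dist_eq_sub_of_le hij, Nat.add_sub_cancel,
    covariance_eq_sub (X := B.indicator 1) (memLp_indicator_one_comp hB measurable_id)
      (memLp_indicator_one_comp hB (hT.iterate d).measurable)]
  simp only [Pi.mul_apply]
  rw [integral_indicator_one hB, integral_indicator_one_comp_iterate hT hB]
  have := integral_indicator_ball_comp_iterate_mul_le hdec hC x₀ R d
  simp_rw [mul_comm (B.indicator 1 _) (B.indicator 1 (T^[d] _))]
  linarith

lemma variance_visitCount_ball_le [IsProbabilityMeasure μ] (hT : MeasurePreserving T μ μ)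
    (hdec : HasExpDecayOfCorrelations μ T C τ) (hC : 0 ≤ C) (hτ : 0 < τ) (x₀ R : ℝ) (N : ℕ) :
    Var[visitCount T (Metric.ball x₀ R) N; μ] ≤
      6 * C * (1 - Real.exp (-τ))⁻¹ * (N * μ.real (Metric.ball x₀ R)) := by
  set p := μ.real (Metric.ball x₀ R)
  have hx1 : Real.exp (-τ) < 1 := Real.exp_lt_one_iff.2 (neg_lt_zero.2 hτ)
  unfold visitCount
  rw [variance_fun_sum' fun k _ =>
    memLp_indicator_one_comp measurableSet_ball (hT.iterate k).measurable]
  calc ∑ i ∈ Finset.range N, ∑ j ∈ Finset.range N, cov[_, _; μ]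
      ≤ ∑ i ∈ Finset.range N,
          3 * C * p * ∑ j ∈ Finset.range N, Real.exp (-τ) ^ Nat.dist i j := by
        gcongr with i _
        rw [Finset.mul_sum]
        gcongr with j _
        exact covariance_indicator_ball_comp_iterate_le hT hdec hC x₀ R i j
    _ ≤ ∑ i ∈ Finset.range N, 3 * C * p * (2 * (1 - Real.exp (-τ))⁻¹) := by
        gcongr with i _
        exact sum_range_pow_dist_le (Real.exp_pos _).le hx1 i N
    _ = 6 * C * (1 - Real.exp (-τ))⁻¹ * (N * p) := by
        rw [Finset.sum_const, Finset.card_range, nsmul_eq_mul]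
        ring

lemma measureReal_forall_iterate_notMem_ball_mul_le [IsProbabilityMeasure μ]
    (hT : MeasurePreserving T μ μ) (hdec : HasExpDecayOfCorrelations μ T C τ) (hC : 0 ≤ C)
    (hτ : 0 < τ) (x₀ R : ℝ) (N : ℕ) :
    μ.real {x | ∀ k < N, T^[k] x ∉ Metric.ball x₀ R} * (N * μ.real (Metric.ball x₀ R)) ≤
      6 * C * (1 - Real.exp (-τ))⁻¹ := by
  set B := Metric.ball x₀ R
  set K := 6 * C * (1 - Real.exp (-τ))⁻¹
  have hK : 0 ≤ K := mul_nonneg (by positivity)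
    (inv_nonneg.2 (sub_nonneg.2 (Real.exp_le_one_iff.2 (neg_nonpos.2 hτ.le))))
  set E : ℝ := N * μ.real B
  rcases (by positivity : 0 ≤ E).eq_or_lt with hE | hE
  · rwa [← show 0 = E from hE, mul_zero]
  have hsub : {x | ∀ k < N, T^[k] x ∉ B} ⊆
      {x | E ≤ |visitCount T B N x - μ[visitCount T B N]|} := by
    intro x hx
    have : visitCount T B N x = 0 :=
      Finset.sum_eq_zero fun k hk => indicator_of_notMem (hx k (Finset.mem_range.1 hk)) _
    show E ≤ |visitCount T B N x - μ[visitCount T B N]|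
    rw [this, integral_visitCount hT measurableSet_ball, zero_sub, abs_neg, abs_of_pos hE]
  have hchebyshev := meas_ge_le_variance_div_sq
    (memLp_visitCount (μ := μ) hT.measurable (measurableSet_ball (x := x₀) (ε := R)) N) hE
  calc μ.real {x | ∀ k < N, T^[k] x ∉ B} * E
      ≤ Var[visitCount T B N; μ] / E ^ 2 * E := by
        gcongr
        exact (measureReal_mono hsub).trans <| ENNReal.toReal_le_of_le_ofReal
          (div_nonneg (variance_nonneg _ _) (sq_nonneg _)) hchebyshev
    _ ≤ K * E / E ^ 2 * E := by
        gcongr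
        exact variance_visitCount_ball_le hT hdec hC hτ x₀ R N
    _ = K := by
        rw [sq, mul_div_mul_right _ _ hE.ne', div_mul_cancel₀ _ hE.ne']

end DecayOfCorrelations

lemma summable_of_mul_two_pow_mul_le {a p : ℕ → ℝ} {K ε : ℝ} (hε : 0 < ε)
    (hp : ∀ᶠ m : ℕ in atTop, Real.log m ^ (1 + ε) / m ≤ p m) (ha₀ : ∀ n, 0 ≤ a n)
    (ha : ∀ n, a n * (2 ^ n * p (2 ^ (n + 1))) ≤ K) : Summable a := by
  set L := Real.log 2 ^ (1 + ε)
  have hL : 0 < L := Real.rpow_pos_of_pos (Real.log_pos one_lt_two) _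
  have hdyadic : ∀ᶠ n : ℕ in atTop,
      ((n + 1 : ℝ) ^ (1 + ε) * L) / 2 ≤ 2 ^ n * p (2 ^ (n + 1)) := by
    filter_upwards [((tendsto_pow_atTop_atTop_of_one_lt one_lt_two).comp
      (tendsto_add_atTop_nat 1)).eventually hp] with n hn
    have hlog : Real.log ((2 : ℝ) ^ (n + 1)) ^ (1 + ε) = (n + 1 : ℝ) ^ (1 + ε) * L := by
      rw [Real.log_pow, Real.mul_rpow (by positivity) (Real.log_pos one_lt_two).le]
      push_cast
      rfl
    simp only [Function.comp_apply, Nat.cast_pow, Nat.cast_ofNat, hlog] at hn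
    calc ((n + 1 : ℝ) ^ (1 + ε) * L) / 2
        = 2 ^ n * ((n + 1 : ℝ) ^ (1 + ε) * L / 2 ^ (n + 1)) := by
          rw [pow_succ]; field_simp
      _ ≤ 2 ^ n * p (2 ^ (n + 1)) := by gcongr
  have hg : Summable fun n : ℕ => 2 * K / L * ((n + 1 : ℝ) ^ (1 + ε))⁻¹ := by
    refine Summable.mul_left _ ?_
    have := (summable_nat_add_iff 1).2 (Real.summable_nat_rpow_inv.2 (by linarith : 1 < 1 + ε))
    simpa using this
  refine hg.of_norm_bounded_eventually_nat ?_
  filter_upwards [hdyadic] with n hn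
  have hq : 0 < (n + 1 : ℝ) ^ (1 + ε) * L / 2 := by positivity
  have hK := (mul_le_mul_of_nonneg_left hn (ha₀ n)).trans (ha n)
  rw [Real.norm_of_nonneg (ha₀ n)]
  calc a n ≤ K / ((n + 1 : ℝ) ^ (1 + ε) * L / 2) := (le_div_iff₀ hq).2 hK
    _ = 2 * K / L * ((n + 1 : ℝ) ^ (1 + ε))⁻¹ := by field_simp

lemma eventually_exists_iterate_mem_of_dyadic {α : Type*} {T : α → α} {B : ℕ → Set α}
    (hB : Antitone B) {x : α} (h : ∀ᶠ n in atTop, ∃ k < 2 ^ n, T^[k] x ∈ B (2 ^ (n + 1))) :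
    ∀ᶠ m in atTop, ∃ k < m, T^[k] x ∈ B m := by
  obtain ⟨n₀, hn₀⟩ := eventually_atTop.1 h
  refine eventually_atTop.2 ⟨2 ^ n₀, fun m hm => ?_⟩
  have hm0 : m ≠ 0 := (Nat.two_pow_pos n₀).trans_le hm |>.ne'
  obtain ⟨k, hk, hkB⟩ := hn₀ (Nat.log 2 m) ((Nat.le_log_iff_pow_le one_lt_two hm0).2 hm)
  exact ⟨k, hk.trans_le (Nat.pow_log_le_self 2 hm0),
    hB (Nat.lt_pow_succ_log_self one_lt_two m).le hkB⟩

theorem stmt0_general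
    (μ : Measure ℝ) [IsProbabilityMeasure μ] (T : ℝ → ℝ)
    (hT : MeasurePreserving T μ μ)
    (C τ : ℝ) (hC : 0 < C) (hτ : 0 < τ)
    (hdec : ∀ (n : ℕ) (f g : ℝ → ℝ), Integrable f μ → BoundedVariationOn g Set.univ →
      |(∫ x, f (T^[n] x) * g x ∂μ) - (∫ x, f x ∂μ) * ∫ x, g x ∂μ| ≤
        C * Real.exp (-τ * n) * (∫ x, |f x| ∂μ) *
          ((⨆ x, |g x|) + (eVariationOn g Set.univ).toReal))
    (x₀ : ℝ) (r : ℕ → ℝ) (hrmono : Antitone r)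
    (ε : ℝ) (hε : 0 < ε) (m₀ : ℕ)
    (hB : ∀ m : ℕ, m₀ ≤ m →
      Real.log m ^ (1 + ε) / m ≤ (μ (Metric.ball x₀ (r m))).toReal) :
    μ {x | ∀ᶠ m : ℕ in atTop, ∃ k < m, T^[k] x ∈ Metric.ball x₀ (r m)} = 1 := by
  set miss : ℕ → Set ℝ := fun n => {x | ∀ k < 2 ^ n, T^[k] x ∉ Metric.ball x₀ (r (2 ^ (n + 1)))}
  have hmiss : Summable fun n => μ.real (miss n) :=
    summable_of_mul_two_pow_mul_le (p := fun m => μ.real (Metric.ball x₀ (r m))) hε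
      (eventually_atTop.2 ⟨m₀, hB⟩) (fun _ => measureReal_nonneg) fun n => by
        exact_mod_cast measureReal_forall_iterate_notMem_ball_mul_le hT hdec hC.le hτ x₀ _ (2 ^ n)
  have hsum : ∑' n, μ (miss n) ≠ ⊤ := by
    convert hmiss.tsum_ofReal_ne_top using 3 with n
    exact (ofReal_measureReal (measure_ne_top μ _)).symm
  have hae : ∀ᵐ x ∂μ, ∀ᶠ m : ℕ in atTop, ∃ k < m, T^[k] x ∈ Metric.ball x₀ (r m) := by
    filter_upwards [ae_eventually_notMem hsum] with x hx
    refine eventually_exists_iterate_mem_of_dyadic (fun _ _ h => Metric.ball_subset_ball (hrmono h))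
      (hx.mono fun n hn => ?_)
    simpa [miss] using hn
  exact (measure_congr (ae_eq_univ.2 (ae_iff.1 hae))).trans measure_univ

/-- **Theorem 1 (BV1).** If `(X,T,μ)` has exponential decay of correlations for functions of
bounded variation against `L¹`, and `(B_m)` is a decreasing sequence of balls with common
centre `x₀` satisfying `μ(B_m) ≥ m⁻¹ (log m)^{1+ε}` for all large `m`, then the set of
eventually always hitting points has full measure. -/
theorem stmt0
    (μ : Measure ℝ) [IsProbabilityMeasure μ] (T : ℝ → ℝ)
    (hT : MeasurePreserving T μ μ)
    (C τ : ℝ) (hC : 0 < C) (hτ : 0 < τ)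
    (hdec : ∀ (n : ℕ) (f g : ℝ → ℝ), Integrable f μ → BoundedVariationOn g Set.univ →
      |(∫ x, f (T^[n] x) * g x ∂μ) - (∫ x, f x ∂μ) * ∫ x, g x ∂μ| ≤
        C * Real.exp (-τ * n) * (∫ x, |f x| ∂μ) *
          ((⨆ x, |g x|) + (eVariationOn g Set.univ).toReal))
    (x₀ : ℝ) (r : ℕ → ℝ) (hr : ∀ m, 0 < r m) (hrmono : Antitone r)
    (ε : ℝ) (hε : 0 < ε) (m₀ : ℕ)
    (hB : ∀ m : ℕ, m₀ ≤ m →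
      Real.log m ^ (1 + ε) / m ≤ (μ (Metric.ball x₀ (r m))).toReal) :
    μ {x | ∀ᶠ m : ℕ in atTop, ∃ k < m, T^[k] x ∈ Metric.ball x₀ (r m)} = 1 :=
  stmt0_general μ T hT C τ hC hτ hdec x₀ r hrmono ε hε m₀ hB
end

section
/- Let (X,T,μ) be a system with exponential decay of correlations for functions of bounded variation against L¹, with constants C, τ > 0. Let (B_m)_{m≥1} be a decreasing (nested) sequence of balls in X (so B_{m+1} ⊆ B_m for all m), assume the map m ↦ m·μ(B_m) is (weakly) increasing, and assume there are ε > 0 and m₀ ∈ ℕ such that μ(B_m) ≥ m^{-1+ε} for all m ≥ m₀. Then for μ-almost every x ∈ X, lim_{m→∞} #{ 0 ≤ k < m : T^k(x) ∈ B_m } / (m·μ(B_m)) = 1. -/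
/-!
The indicator of a ball has variation at most `2`, so decay of correlations bounds the covariance of
`1_B ∘ T^k` and `1_B ∘ T^l` by `3 C μ(B) e^{-τ |k - l|}`, and hence the variance of the visit count
`S_n(B) = ∑_{k<n} 1_B ∘ T^k` by a constant times its mean `n μ(B)`. Along blocks `N_j = (j + 1)^s`
with `s ε > 1` these means grow at least like `j^{s ε}`, so the variances of `S / 𝔼 S` are summable
and `S / 𝔼 S → 1` almost surely, both for `S_{N_{j+1}}(B_{N_j})` and for `S_{N_j}(B_{N_{j+1}})`.
As the balls are nested and `m μ(B_m)` increases, these two ratios bracket the normalised count at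
every `m ∈ [N_j, N_{j+1})`, and `N_{j+1} / N_j → 1` closes the gap.
-/

open MeasureTheory ProbabilityTheory Filter Set Finset Topology

lemma sum_range_abs_indicator_succ_sub_le_two {t : Set ℕ} (ht : t.OrdConnected) (n : ℕ) :
    ∑ i ∈ range n, |t.indicator (1 : ℕ → ℝ) (i + 1) - t.indicator 1 i| ≤ 2 := by
  classical
  have hjump : ∀ i, |t.indicator (1 : ℕ → ℝ) (i + 1) - t.indicator 1 i| =
      (if i ∉ t ∧ i + 1 ∈ t then 1 else 0) + (if i ∈ t ∧ i + 1 ∉ t then 1 else 0) := by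
    intro i
    by_cases h : i ∈ t <;> by_cases h' : i + 1 ∈ t <;> simp [h, h']
  -- By order-convexity, `t` is entered at most once and left at most once.
  have hentries : #{i ∈ range n | i ∉ t ∧ i + 1 ∈ t} ≤ 1 := by
    refine card_le_one.2 fun i hi j hj => ?_
    simp only [mem_filter] at hi hj
    by_contra hij
    rcases lt_or_gt_of_ne hij with h | h
    · exact hj.2.1 (ht.out hi.2.2 hj.2.2 ⟨h, j.le_succ⟩)
    · exact hi.2.1 (ht.out hj.2.2 hi.2.2 ⟨h, i.le_succ⟩)
  have hexits : #{i ∈ range n | i ∈ t ∧ i + 1 ∉ t} ≤ 1 := by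
    refine card_le_one.2 fun i hi j hj => ?_
    simp only [mem_filter] at hi hj
    by_contra hij
    rcases lt_or_gt_of_ne hij with h | h
    · exact hi.2.2 (ht.out hi.2.1 hj.2.1 ⟨i.le_succ, h⟩)
    · exact hj.2.2 (ht.out hj.2.1 hi.2.1 ⟨j.le_succ, h⟩)
  rw [sum_congr rfl fun i _ => hjump i, sum_add_distrib, sum_boole, sum_boole]
  exact_mod_cast add_le_add hentries hexits

theorem eVariationOn_indicator_one_le_two {α : Type*} [LinearOrder α] {s : Set α}
    (hs : s.OrdConnected) : eVariationOn (s.indicator (1 : α → ℝ)) univ ≤ 2 := by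
  refine iSup_le fun ⟨n, u, hu, _⟩ => ?_
  calc ∑ i ∈ range n, edist (s.indicator 1 (u (i + 1))) (s.indicator 1 (u i))
      = ENNReal.ofReal (∑ i ∈ range n,
          |(u ⁻¹' s).indicator (1 : ℕ → ℝ) (i + 1) - (u ⁻¹' s).indicator 1 i|) := by
        rw [ENNReal.ofReal_sum_of_nonneg fun _ _ => abs_nonneg _]
        refine sum_congr rfl fun i _ => ?_
        rw [edist_dist, Real.dist_eq]
        rfl
    _ ≤ 2 := by
        simpa using ENNReal.ofReal_le_ofReal
          (sum_range_abs_indicator_succ_sub_le_two (hs.preimage_mono hu) n)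

lemma sum_range_pow_dist_le_s1 {ρ : ℝ} (h0 : 0 ≤ ρ) (h1 : ρ < 1) (k n : ℕ) :
    ∑ l ∈ range n, ρ ^ Nat.dist k l ≤ 2 / (1 - ρ) := by
  have hgeom : ∀ F : Finset ℕ, Set.InjOn (Nat.dist k) F →
      ∑ l ∈ F, ρ ^ Nat.dist k l ≤ (1 - ρ)⁻¹ := fun F hF => by
    rw [← sum_image hF, ← tsum_geometric_of_lt_one h0 h1]
    exact (summable_geometric_of_lt_one h0 h1).sum_le_tsum _ fun _ _ => pow_nonneg h0 _
  rw [← sum_filter_add_sum_filter_not (range n) (· ≤ k), div_eq_mul_inv, two_mul]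
  refine add_le_add (hgeom _ fun l hl l' hl' h => ?_) (hgeom _ fun l hl l' hl' h => ?_) <;>
    simp only [coe_filter, mem_ofPred_eq] at hl hl' <;> simp only [Nat.dist] at h <;> omega

section Stationary

variable {Ω : Type*} [MeasurableSpace Ω] {μ : Measure Ω}

lemma MeasureTheory.MeasurePreserving.covariance_comp {Ω' : Type*} [MeasurableSpace Ω']
    {ν : Measure Ω'} {T : Ω → Ω'} (hT : MeasurePreserving T μ ν) {X Y : Ω' → ℝ}
    (hX : AEStronglyMeasurable X ν) (hY : AEStronglyMeasurable Y ν) :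
    cov[X ∘ T, Y ∘ T; μ] = cov[X, Y; ν] := by
  rw [← hT.map_eq] at hX hY ⊢
  exact (covariance_map hX hY hT.aemeasurable).symm

lemma covariance_comp_iterate_comp_iterate {T : Ω → Ω} (hT : MeasurePreserving T μ μ)
    {f : Ω → ℝ} (hf : AEStronglyMeasurable f μ) {k l : ℕ} (hkl : k ≤ l) :
    cov[f ∘ T^[k], f ∘ T^[l]; μ] = cov[f ∘ T^[l - k], f; μ] := by
  have hl : f ∘ T^[l] = (f ∘ T^[l - k]) ∘ T^[k] := by
    rw [Function.comp_assoc, ← Function.iterate_add, Nat.sub_add_cancel hkl]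
  rw [hl, (hT.iterate k).covariance_comp hf (hf.comp_measurePreserving (hT.iterate _)),
    covariance_comm]

theorem variance_birkhoffSum_le [IsFiniteMeasure μ] {T : Ω → Ω} (hT : MeasurePreserving T μ μ)
    {f : Ω → ℝ} (hf : MemLp f 2 μ) {c ρ : ℝ} (hρ0 : 0 ≤ ρ) (hρ1 : ρ < 1)
    (hcov : ∀ n, |cov[f ∘ T^[n], f; μ]| ≤ c * ρ ^ n) (n : ℕ) :
    Var[birkhoffSum T f n; μ] ≤ 2 * c / (1 - ρ) * n := by
  have hc : 0 ≤ c := by simpa using (abs_nonneg _).trans (hcov 0)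
  have hpair : ∀ k l, cov[f ∘ T^[k], f ∘ T^[l]; μ] ≤ c * ρ ^ Nat.dist k l := by
    intro k l
    rcases le_total k l with h | h
    · rw [covariance_comp_iterate_comp_iterate hT hf.1 h, Nat.dist_eq_sub_of_le h]
      exact (le_abs_self _).trans (hcov _)
    · rw [covariance_comm, covariance_comp_iterate_comp_iterate hT hf.1 h,
        Nat.dist_eq_sub_of_le_right h]
      exact (le_abs_self _).trans (hcov _)
  calc Var[birkhoffSum T f n; μ]
      = ∑ k ∈ range n, ∑ l ∈ range n, cov[f ∘ T^[k], f ∘ T^[l]; μ] :=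
        variance_fun_sum' fun k _ => hf.comp_measurePreserving (hT.iterate k)
    _ ≤ ∑ _k ∈ range n, c * (2 / (1 - ρ)) := by
        refine sum_le_sum fun k _ => (sum_le_sum fun l _ => hpair k l).trans ?_
        rw [← mul_sum]
        exact mul_le_mul_of_nonneg_left (sum_range_pow_dist_le_s1 hρ0 hρ1 k n) hc
    _ = 2 * c / (1 - ρ) * n := by
        rw [sum_const, card_range, nsmul_eq_mul]
        ring

theorem ae_tendsto_sub_integral_of_summable_variance [IsFiniteMeasure μ] {X : ℕ → Ω → ℝ}
    (hX : ∀ j, MemLp (X j) 2 μ) (hsum : Summable fun j => Var[X j; μ]) :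
    ∀ᵐ ω ∂μ, Tendsto (fun j => X j ω - μ[X j]) atTop (𝓝 0) := by
  have hmeas : ∀ j, AEMeasurable (fun ω => ENNReal.ofReal ((X j ω - μ[X j]) ^ 2)) μ :=
    fun j => (((hX j).aemeasurable.sub_const _).pow_const 2).ennreal_ofReal
  have hfin : ∫⁻ ω, ∑' j, ENNReal.ofReal ((X j ω - μ[X j]) ^ 2) ∂μ ≠ ⊤ := by
    rw [lintegral_tsum hmeas]
    simp_rw [← evariance_eq_lintegral_ofReal, ← ofReal_variance (hX _),
      ← ENNReal.ofReal_tsum_of_nonneg (fun j => variance_nonneg _ _) hsum]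
    exact ENNReal.ofReal_ne_top
  filter_upwards [ae_lt_top' (AEMeasurable.tsum hmeas) hfin] with ω hω
  have hsq : Tendsto (fun j => (X j ω - μ[X j]) ^ 2) atTop (𝓝 0) := by
    simpa [Function.comp_def, ENNReal.toReal_ofReal (sq_nonneg _)] using
      (ENNReal.tendsto_toReal ENNReal.zero_ne_top).comp
        (ENNReal.tendsto_atTop_zero_of_tsum_ne_top hω.ne)
  rw [tendsto_zero_iff_abs_tendsto_zero]
  simpa [Function.comp_def, Real.sqrt_sq_eq_abs] using hsq.sqrt

theorem ae_tendsto_div_integral_of_variance_le [IsFiniteMeasure μ] {X : ℕ → Ω → ℝ}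
    (hX : ∀ j, MemLp (X j) 2 μ) {K : ℝ} (hvar : ∀ j, Var[X j; μ] ≤ K * μ[X j])
    (hne : ∀ᶠ j in atTop, μ[X j] ≠ 0) (hsum : Summable fun j => (μ[X j])⁻¹) :
    ∀ᵐ ω ∂μ, Tendsto (fun j => X j ω / μ[X j]) atTop (𝓝 1) := by
  set Y : ℕ → Ω → ℝ := fun j ω => X j ω * (μ[X j])⁻¹ with hY
  have hvarY : ∀ j, Var[Y j; μ] ≤ K * (μ[X j])⁻¹ := by
    intro j
    rw [hY, variance_mul_const]
    rcases eq_or_ne (μ[X j]) 0 with h | h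
    · simp [h]
    · calc Var[X j; μ] * (μ[X j])⁻¹ ^ 2 ≤ K * μ[X j] * (μ[X j])⁻¹ ^ 2 := by gcongr; exact hvar j
        _ = K * (μ[X j])⁻¹ := by field_simp
  have hmeanY : ∀ᶠ j in atTop, μ[Y j] = 1 :=
    hne.mono fun j h => by simp only [hY, integral_mul_const, mul_inv_cancel₀ h]
  have hY2 : ∀ j, MemLp (Y j) 2 μ := fun j => (hX j).mul_const _
  filter_upwards [ae_tendsto_sub_integral_of_summable_variance hY2
    (.of_nonneg_of_le (fun j => variance_nonneg _ _) hvarY (hsum.mul_left K))] with ω hω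
  have h := hω.add (tendsto_const_nhds.congr' (hmeanY.mono fun j h => h.symm))
  simpa [hY, div_eq_mul_inv] using h

lemma MeasureTheory.MeasurePreserving.integral_comp_of_aestronglyMeasurable {Ω' : Type*}
    [MeasurableSpace Ω'] {ν : Measure Ω'} {T : Ω → Ω'} (hT : MeasurePreserving T μ ν)
    {g : Ω' → ℝ} (hg : AEStronglyMeasurable g ν) : ∫ x, g (T x) ∂μ = ∫ y, g y ∂ν := by
  rw [← hT.map_eq] at hg ⊢
  exact (integral_map hT.aemeasurable hg).symm

lemma MeasureTheory.MeasurePreserving.integral_birkhoffSum {T : Ω → Ω}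
    (hT : MeasurePreserving T μ μ) {f : Ω → ℝ} (hf : Integrable f μ) (n : ℕ) :
    ∫ x, birkhoffSum T f n x ∂μ = n * ∫ x, f x ∂μ := by
  simp only [birkhoffSum]
  rw [integral_finsetSum (f := fun k x => f (T^[k] x)) _ fun k _ =>
    (hT.iterate k).integrable_comp_of_integrable hf]
  simp [(hT.iterate _).integral_comp_of_aestronglyMeasurable hf.1]

end Stationary

lemma tendsto_of_bracket {N : ℕ → ℕ} (hN : StrictMono N) {g L U : ℕ → ℝ} {l : ℝ}
    (hL : Tendsto L atTop (𝓝 l)) (hU : Tendsto U atTop (𝓝 l))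
    (hbracket : ∀ᶠ j in atTop, ∀ m, N j ≤ m → m < N (j + 1) → L j ≤ g m ∧ g m ≤ U j) :
    Tendsto g atTop (𝓝 l) := by
  set ι : ℕ → ℕ := fun m => Nat.findGreatest (fun j => N j ≤ m) m
  have hι_le : ∀ m, N 0 ≤ m → N (ι m) ≤ m := fun m hm =>
    Nat.findGreatest_spec (P := fun j => N j ≤ m) (Nat.zero_le m) hm
  have hι_lt : ∀ m, m < N (ι m + 1) := fun m => by
    by_contra! h
    exact Nat.findGreatest_is_greatest (Nat.lt_succ_self _) ((hN.id_le _).trans h) h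
  have hι : Tendsto ι atTop atTop := tendsto_atTop_atTop.2 fun J =>
    ⟨N J, fun m hm => Nat.le_findGreatest ((hN.id_le J).trans hm) hm⟩
  have hg : ∀ᶠ m in atTop, L (ι m) ≤ g m ∧ g m ≤ U (ι m) := by
    filter_upwards [eventually_ge_atTop (N 0), hι.eventually hbracket] with m h0 h
    exact h m (hι_le m h0) (hι_lt m)
  exact tendsto_of_tendsto_of_tendsto_of_le_of_le' (hL.comp hι) (hU.comp hι)
    (hg.mono fun _ h => h.1) (hg.mono fun _ h => h.2)

/-- For `N j ≤ m < N (j + 1)`, monotonicity squeezes `F m m / (m a m)` between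
`F (N (j + 1)) (N j) / (N (j + 1) a (N (j + 1)))` and `F (N j) (N (j + 1)) / (N j a (N j))`. -/
theorem tendsto_diag_div_of_tendsto_blocks {F : ℕ → ℕ → ℝ} {a : ℕ → ℝ} {N : ℕ → ℕ}
    (hF : ∀ ⦃m m' n n' : ℕ⦄, m ≤ m' → n' ≤ n → F m' n' ≤ F m n) (hF0 : ∀ m n, 0 ≤ F m n)
    (ha : ∀ᶠ m in atTop, 0 < a m) (hmono : Monotone fun m : ℕ => (m : ℝ) * a m)
    (hN : StrictMono N) (hratio : Tendsto (fun j => (N (j + 1) : ℝ) / N j) atTop (𝓝 1))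
    (hupper : Tendsto (fun j => F (N j) (N (j + 1)) / (N (j + 1) * a (N j))) atTop (𝓝 1))
    (hlower : Tendsto (fun j => F (N (j + 1)) (N j) / (N j * a (N (j + 1)))) atTop (𝓝 1)) :
    Tendsto (fun m => F m m / (m * a m)) atTop (𝓝 1) := by
  have hpos : ∀ᶠ j in atTop, 0 < a (N j) ∧ 0 < a (N (j + 1)) ∧ 0 < N j :=
    ((hN.tendsto_atTop.eventually ha).and ((tendsto_add_atTop_iff_nat 1).2
      hN.tendsto_atTop |>.eventually ha)).and (hN.tendsto_atTop.eventually_gt_atTop 0)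
      |>.mono fun j h => ⟨h.1.1, h.1.2, h.2⟩
  have hN1 : ∀ j, 0 < N j → (0 : ℝ) < N (j + 1) := fun j h => by
    exact_mod_cast h.trans (hN j.lt_succ_self)
  refine tendsto_of_bracket hN (L := fun j => F (N (j + 1)) (N j) / (N (j + 1) * a (N (j + 1))))
    (U := fun j => F (N j) (N (j + 1)) / (N j * a (N j))) ?_ ?_ ?_
  · simpa using (hlower.mul (hratio.inv₀ one_ne_zero)).congr' <| hpos.mono fun j ⟨_, h1, h2⟩ => by
      have := hN1 j h2
      field_simp
  · simpa using (hupper.mul hratio).congr' <| hpos.mono fun j ⟨h0, _, h2⟩ => by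
      have := hN1 j h2
      field_simp
  · filter_upwards [hpos] with j ⟨h0, _, h2⟩ m hjm hmj
    have hD : 0 < (N j : ℝ) * a (N j) := mul_pos (by exact_mod_cast h2) h0
    exact ⟨div_le_div₀ (hF0 m m) (hF hmj.le hjm) (hD.trans_le (hmono hjm)) (hmono hmj.le),
      div_le_div₀ (hF0 _ _) (hF hjm hmj.le) hD (hmono hjm)⟩

lemma ncard_setOf_iterate_mem_eq_birkhoffSum {α : Type*} (T : α → α) (s : Set α) (n : ℕ) (x : α) :
    ({k : ℕ | k < n ∧ T^[k] x ∈ s}.ncard : ℝ) = birkhoffSum T (s.indicator 1) n x := by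
  classical
  have h : {k : ℕ | k < n ∧ T^[k] x ∈ s} = ↑({k ∈ range n | T^[k] x ∈ s}) := by ext; simp
  rw [h, ncard_coe_finset, birkhoffSum, ← sum_boole]
  simp [indicator_apply]

lemma birkhoffSum_indicator_one_mono {α : Type*} (T : α → α) {s t : Set α} (hst : s ⊆ t)
    {m n : ℕ} (hmn : m ≤ n) (x : α) :
    birkhoffSum T (s.indicator (1 : α → ℝ)) m x ≤ birkhoffSum T (t.indicator 1) n x := by
  refine (sum_le_sum fun k _ => ?_).trans
    (sum_le_sum_of_subset_of_nonneg (range_mono hmn) fun k _ _ => ?_)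
  · exact indicator_le_indicator_of_subset hst (fun _ => zero_le_one) _
  · exact indicator_nonneg (fun _ _ => zero_le_one) _

lemma summable_inv_of_eventually_le {u v : ℕ → ℝ} {c : ℝ} (hc : 0 < c)
    (hu : Summable fun j => (u j)⁻¹) (huv : ∀ᶠ j in atTop, 0 < u j ∧ c * u j ≤ v j) :
    Summable fun j => (v j)⁻¹ :=
  (hu.mul_left c⁻¹).of_norm_bounded_eventually_nat <| huv.mono fun j ⟨hu0, hle⟩ => by
    rw [Real.norm_eq_abs, abs_inv, abs_of_pos ((mul_pos hc hu0).trans_le hle), ← mul_inv]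
    exact inv_anti₀ (mul_pos hc hu0) hle

lemma tendsto_succ_pow_div_pow (s : ℕ) :
    Tendsto (fun j : ℕ => (((j + 1 + 1) ^ s : ℕ) : ℝ) / ((j + 1) ^ s : ℕ)) atTop (𝓝 1) := by
  have h := ((tendsto_one_div_add_atTop_nhds_zero_nat (𝕜 := ℝ)).const_add 1).pow s
  rw [add_zero, one_pow] at h
  refine h.congr fun j => ?_
  push_cast
  rw [← div_pow]
  congr 1
  field_simp

lemma summable_inv_comp_succ_pow {D : ℕ → ℝ} {ε : ℝ} (hD : ∀ᶠ m : ℕ in atTop, (m : ℝ) ^ ε ≤ D m)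
    {s : ℕ} (hs : 1 < s * ε) : Summable fun j : ℕ => (D ((j + 1) ^ s))⁻¹ := by
  have hpow : Tendsto (fun j : ℕ => (j + 1) ^ s) atTop atTop :=
    (tendsto_pow_atTop (by rintro rfl; norm_num at hs)).comp (tendsto_add_atTop_nat 1)
  have hrpow : ∀ j : ℕ, ((j + 1 : ℕ) : ℝ) ^ (s * ε) = (((j + 1) ^ s : ℕ) : ℝ) ^ ε := fun j => by
    push_cast
    rw [Real.rpow_natCast_mul (by positivity)]
  refine summable_inv_of_eventually_le (u := fun j : ℕ => ((j + 1 : ℕ) : ℝ) ^ (s * ε)) one_pos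
    ((summable_nat_add_iff 1).2 (Real.summable_nat_rpow_inv.2 hs))
    ((hpow.eventually hD).mono fun j h => ⟨by positivity, ?_⟩)
  rw [one_mul, hrpow]
  exact h

section DecayOfCorrelations

variable {α : Type*} [LinearOrder α] [MeasurableSpace α]

def HasExpDecayOfCorrelationsBV (μ : Measure α) (T : α → α) (C τ : ℝ) : Prop :=
  ∀ (n : ℕ) (f g : α → ℝ), Integrable f μ → BoundedVariationOn g univ →
    |(∫ x, f (T^[n] x) * g x ∂μ) - (∫ x, f x ∂μ) * ∫ x, g x ∂μ| ≤
      C * Real.exp (-τ * n) * (∫ x, |f x| ∂μ) *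
        ((⨆ x, |g x|) + (eVariationOn g univ).toReal)

variable {μ : Measure α} [IsProbabilityMeasure μ] {T : α → α} {C τ : ℝ}

lemma abs_covariance_indicator_iterate_le (hT : MeasurePreserving T μ μ)
    (hdec : HasExpDecayOfCorrelationsBV μ T C τ) (hC : 0 ≤ C) {s : Set α}
    (hs : s.OrdConnected) (hsm : MeasurableSet s) (n : ℕ) :
    |cov[s.indicator 1 ∘ T^[n], s.indicator 1; μ]| ≤ 3 * C * μ.real s * Real.exp (-τ) ^ n := by
  set χ := s.indicator (1 : α → ℝ)
  have hχ : MemLp χ 2 μ := memLp_indicator_const 2 hsm 1 (Or.inr (measure_ne_top μ s))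
  have hvar : (eVariationOn χ univ).toReal ≤ 2 := by
    simpa using ENNReal.toReal_mono (by norm_num) (eVariationOn_indicator_one_le_two hs)
  have hsup : (⨆ x, |χ x|) ≤ 1 :=
    Real.iSup_le (fun x => by by_cases h : x ∈ s <;> simp [χ, h]) zero_le_one
  have hint : ∫ x, χ x ∂μ = μ.real s := integral_indicator_one hsm
  have hint_abs : ∫ x, |χ x| ∂μ = μ.real s := by
    rw [← hint]
    congr with x
    by_cases h : x ∈ s <;> simp [χ, h]
  have hinv : ∫ x, χ (T^[n] x) ∂μ = ∫ x, χ x ∂μ :=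
    (hT.iterate n).integral_comp_of_aestronglyMeasurable hχ.1
  have hbv : BoundedVariationOn χ univ :=
    ((eVariationOn_indicator_one_le_two hs).trans_lt (by norm_num)).ne
  rw [covariance_eq_sub (hχ.comp_measurePreserving (hT.iterate n)) hχ]
  calc |∫ x, χ (T^[n] x) * χ x ∂μ - (∫ x, χ (T^[n] x) ∂μ) * ∫ x, χ x ∂μ|
      ≤ C * Real.exp (-τ * n) * μ.real s * ((⨆ x, |χ x|) + (eVariationOn χ univ).toReal) := by
        rw [hinv, ← hint_abs]
        exact hdec n χ χ (hχ.integrable one_le_two) hbv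
    _ ≤ C * Real.exp (-τ * n) * μ.real s * 3 := by gcongr; linarith
    _ = 3 * C * μ.real s * Real.exp (-τ) ^ n := by
        rw [← Real.exp_nat_mul]
        ring_nf

theorem ae_tendsto_birkhoffSum_indicator_div (hT : MeasurePreserving T μ μ)
    (hdec : HasExpDecayOfCorrelationsBV μ T C τ) (hC : 0 ≤ C) (hτ : 0 < τ) {s : ℕ → Set α}
    (hs : ∀ j, (s j).OrdConnected) (hsm : ∀ j, MeasurableSet (s j)) {n : ℕ → ℕ}
    (hne : ∀ᶠ j in atTop, (n j : ℝ) * μ.real (s j) ≠ 0)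
    (hsum : Summable fun j => ((n j : ℝ) * μ.real (s j))⁻¹) :
    ∀ᵐ x ∂μ, Tendsto (fun j => birkhoffSum T ((s j).indicator 1) (n j) x /
      (n j * μ.real (s j))) atTop (𝓝 1) := by
  have hχ : ∀ j, MemLp ((s j).indicator (1 : α → ℝ)) 2 μ := fun j =>
    memLp_indicator_const 2 (hsm j) 1 (Or.inr (measure_ne_top μ _))
  have hmean : ∀ j, μ[birkhoffSum T ((s j).indicator 1) (n j)] = n j * μ.real (s j) := fun j => by
    rw [hT.integral_birkhoffSum ((hχ j).integrable one_le_two), integral_indicator_one (hsm j)]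
  have hρ1 : Real.exp (-τ) < 1 := Real.exp_lt_one_iff.2 (neg_neg_iff_pos.2 hτ)
  have hvar : ∀ j, Var[birkhoffSum T ((s j).indicator 1) (n j); μ] ≤
      6 * C / (1 - Real.exp (-τ)) * μ[birkhoffSum T ((s j).indicator 1) (n j)] := fun j => by
    refine (variance_birkhoffSum_le hT (hχ j) (Real.exp_nonneg _) hρ1
      (abs_covariance_indicator_iterate_le hT hdec hC (hs j) (hsm j)) (n j)).trans_eq ?_
    rw [hmean]
    ring
  have hX : ∀ j, MemLp (birkhoffSum T ((s j).indicator 1) (n j)) 2 μ := fun j =>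
    memLp_finsetSum (range (n j)) fun k _ => (hχ j).comp_measurePreserving (hT.iterate k)
  simpa only [hmean] using ae_tendsto_div_integral_of_variance_le hX hvar
    (by simpa only [hmean] using hne) (by simpa only [hmean] using hsum)

theorem ae_tendsto_birkhoffSum_indicator_div_of_blocks (hT : MeasurePreserving T μ μ)
    (hdec : HasExpDecayOfCorrelationsBV μ T C τ) (hC : 0 ≤ C) (hτ : 0 < τ) {B : ℕ → Set α}
    (hB : Antitone B) (hconn : ∀ m, (B m).OrdConnected) (hmeas : ∀ m, MeasurableSet (B m))
    (hmono : Monotone fun m : ℕ => (m : ℝ) * μ.real (B m)) {N : ℕ → ℕ} (hN : StrictMono N)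
    (hratio : Tendsto (fun j => (N (j + 1) : ℝ) / N j) atTop (𝓝 1))
    (hpos : ∀ᶠ j in atTop, 0 < N j * μ.real (B (N j)))
    (hsum : Summable fun j => ((N j : ℝ) * μ.real (B (N j)))⁻¹) :
    ∀ᵐ x ∂μ, Tendsto (fun m => birkhoffSum T ((B m).indicator 1) m x / (m * μ.real (B m)))
      atTop (𝓝 1) := by
  have ha : ∀ᶠ m in atTop, 0 < μ.real (B m) := by
    obtain ⟨j, hj⟩ := hpos.exists
    filter_upwards [eventually_ge_atTop (N j)] with m hm
    exact pos_of_mul_pos_right (hj.trans_le (hmono hm)) m.cast_nonneg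
  have hupper : ∀ᶠ j in atTop, 0 < N j * μ.real (B (N j)) ∧
      1 * (N j * μ.real (B (N j))) ≤ N (j + 1) * μ.real (B (N j)) :=
    hpos.mono fun j h => ⟨h, by
      rw [one_mul]
      exact mul_le_mul_of_nonneg_right (by exact_mod_cast hN.monotone j.le_succ)
        measureReal_nonneg⟩
  have hlower : ∀ᶠ j in atTop, 0 < N j * μ.real (B (N j)) ∧
      2⁻¹ * (N j * μ.real (B (N j))) ≤ N j * μ.real (B (N (j + 1))) := by
    filter_upwards [hpos, hratio.eventually (gt_mem_nhds one_lt_two)] with j hj h2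
    have hNj : (0 : ℝ) < N j := pos_of_mul_pos_left hj measureReal_nonneg
    have hN2 : (N (j + 1) : ℝ) ≤ 2 * N j := by
      rw [div_lt_iff₀ hNj] at h2
      exact h2.le
    refine ⟨hj, ?_⟩
    calc 2⁻¹ * (N j * μ.real (B (N j))) ≤ 2⁻¹ * (N (j + 1) * μ.real (B (N (j + 1)))) :=
          mul_le_mul_of_nonneg_left (hmono (hN.monotone j.le_succ)) (by norm_num)
      _ ≤ 2⁻¹ * (2 * N j * μ.real (B (N (j + 1)))) := by gcongr
      _ = N j * μ.real (B (N (j + 1))) := by ring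
  filter_upwards [ae_tendsto_birkhoffSum_indicator_div hT hdec hC hτ (fun _ => hconn _)
      (fun _ => hmeas _) (hupper.mono fun _ h => ((mul_pos one_pos h.1).trans_le h.2).ne')
      (summable_inv_of_eventually_le one_pos hsum hupper),
    ae_tendsto_birkhoffSum_indicator_div hT hdec hC hτ (fun _ => hconn _)
      (fun _ => hmeas _) (hlower.mono fun _ h => ((mul_pos (by norm_num) h.1).trans_le h.2).ne')
      (summable_inv_of_eventually_le (by norm_num) hsum hlower)] with x hup hlow
  exact tendsto_diag_div_of_tendsto_blocks
    (fun m m' n n' hm hn => birkhoffSum_indicator_one_mono T (hB hm) hn x)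
    (fun m n => sum_nonneg fun _ _ => indicator_nonneg (fun _ _ => zero_le_one) _)
    ha hmono hN hratio hup hlow

end DecayOfCorrelations

theorem stmt1_general
    (μ : Measure ℝ) [IsProbabilityMeasure μ] (T : ℝ → ℝ)
    (hT : MeasurePreserving T μ μ)
    (C τ : ℝ) (hC : 0 < C) (hτ : 0 < τ)
    (hdec : ∀ (n : ℕ) (f g : ℝ → ℝ), Integrable f μ → BoundedVariationOn g Set.univ →
      |(∫ x, f (T^[n] x) * g x ∂μ) - (∫ x, f x ∂μ) * ∫ x, g x ∂μ| ≤
        C * Real.exp (-τ * n) * (∫ x, |f x| ∂μ) *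
          ((⨆ x, |g x|) + (eVariationOn g Set.univ).toReal))
    (c r : ℕ → ℝ)
    (hnest : ∀ m, Metric.ball (c (m + 1)) (r (m + 1)) ⊆ Metric.ball (c m) (r m))
    (hmono : Monotone fun m : ℕ => (m : ℝ) * (μ (Metric.ball (c m) (r m))).toReal)
    (ε : ℝ) (hε : 0 < ε) (m₀ : ℕ)
    (hB : ∀ m : ℕ, m₀ ≤ m →
      (m : ℝ) ^ (-1 + ε) ≤ (μ (Metric.ball (c m) (r m))).toReal) :
    ∀ᵐ x ∂μ, Tendsto (fun m : ℕ =>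
        ({k : ℕ | k < m ∧ T^[k] x ∈ Metric.ball (c m) (r m)}.ncard : ℝ) /
          ((m : ℝ) * (μ (Metric.ball (c m) (r m))).toReal))
      atTop (nhds 1) := by
  set B : ℕ → Set ℝ := fun m => Metric.ball (c m) (r m)
  have hD : ∀ᶠ m : ℕ in atTop, (m : ℝ) ^ ε ≤ m * μ.real (B m) := by
    filter_upwards [eventually_ge_atTop (max m₀ 1)] with m hm
    have hm0 : (0 : ℝ) < m := by exact_mod_cast (le_max_right _ _).trans hm
    calc (m : ℝ) ^ ε = m * (m : ℝ) ^ (-1 + ε) := by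
          rw [Real.rpow_add hm0, Real.rpow_neg_one, mul_inv_cancel_left₀ hm0.ne']
      _ ≤ m * μ.real (B m) := mul_le_mul_of_nonneg_left (hB m ((le_max_left _ _).trans hm)) hm0.le
  obtain ⟨s, hs⟩ : ∃ s : ℕ, 1 < s * ε := by
    obtain ⟨s, hs⟩ := exists_nat_gt ε⁻¹
    exact ⟨s, by rwa [inv_lt_iff_one_lt_mul₀ hε] at hs⟩
  have hs0 : s ≠ 0 := by rintro rfl; norm_num at hs
  have hN : StrictMono fun j : ℕ => (j + 1) ^ s := fun i j h => Nat.pow_lt_pow_left (by omega) hs0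
  have hpos : ∀ᶠ j : ℕ in atTop, 0 < ((j + 1) ^ s : ℕ) * μ.real (B ((j + 1) ^ s)) :=
    (hN.tendsto_atTop.eventually (hD.and (eventually_ge_atTop 1))).mono fun j h =>
      (Real.rpow_pos_of_pos (by exact_mod_cast h.2) ε).trans_le h.1
  have key := ae_tendsto_birkhoffSum_indicator_div_of_blocks hT hdec hC.le hτ
    (antitone_nat_of_succ_le hnest) (fun m => by simpa [B, Real.ball_eq_Ioo] using ordConnected_Ioo)
    (fun _ => measurableSet_ball) hmono hN
    (tendsto_succ_pow_div_pow s) hpos (summable_inv_comp_succ_pow hD hs)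
  simpa only [ncard_setOf_iterate_mem_eq_birkhoffSum, measureReal_def] using key

/-- **Theorem 2 (BV2).** Under exponential decay of correlations for BV against `L¹`,
for a nested sequence of balls with `m ↦ m μ(B_m)` increasing and `μ(B_m) ≥ m^{-1+ε}`,
for a.e. `x` the number of `k < m` with `T^k x ∈ B_m` is asymptotic to `m μ(B_m)`. -/
theorem stmt1
    (μ : Measure ℝ) [IsProbabilityMeasure μ] (T : ℝ → ℝ)
    (hT : MeasurePreserving T μ μ)
    (C τ : ℝ) (hC : 0 < C) (hτ : 0 < τ)
    (hdec : ∀ (n : ℕ) (f g : ℝ → ℝ), Integrable f μ → BoundedVariationOn g Set.univ →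
      |(∫ x, f (T^[n] x) * g x ∂μ) - (∫ x, f x ∂μ) * ∫ x, g x ∂μ| ≤
        C * Real.exp (-τ * n) * (∫ x, |f x| ∂μ) *
          ((⨆ x, |g x|) + (eVariationOn g Set.univ).toReal))
    (c r : ℕ → ℝ) (hr : ∀ m, 0 < r m)
    (hnest : ∀ m, Metric.ball (c (m + 1)) (r (m + 1)) ⊆ Metric.ball (c m) (r m))
    (hmono : Monotone fun m : ℕ => (m : ℝ) * (μ (Metric.ball (c m) (r m))).toReal)
    (ε : ℝ) (hε : 0 < ε) (m₀ : ℕ)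
    (hB : ∀ m : ℕ, m₀ ≤ m →
      (m : ℝ) ^ (-1 + ε) ≤ (μ (Metric.ball (c m) (r m))).toReal) :
    ∀ᵐ x ∂μ, Tendsto (fun m : ℕ =>
        ({k : ℕ | k < m ∧ T^[k] x ∈ Metric.ball (c m) (r m)}.ncard : ℝ) /
          ((m : ℝ) * (μ (Metric.ball (c m) (r m))).toReal))
      atTop (nhds 1) :=
  stmt1_general μ T hT C τ hC hτ hdec c r hnest hmono ε hε m₀ hB
end
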